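/- There exist subsets O and C of the unit circle S¹ = {z ∈ ℂ : ‖z‖ = 1} (with the subspace topology) such that O is open in S¹, C is closed in S¹, O ∪ C = S¹, O is contractible, the inclusion map C ∩ O ↪ C is a homotopy equivalence, and yet S¹ is not contractible. Hence the inference scheme 'if a space X is covered by a contractible open set O and a closed set C such that the inclusion C ∩ O ↪ C is a homotopy equivalence, then X is contractible' is invalid. -/

import Mathlib

/-!
Put `O = S¹ \ {-1}` and let `C` be the closed upper half circle. On each of `O`, `C` and `C ∩ O`
the argument is continuous (on `C` because `-1` is approached only from the upper half plane)
and is inverted by `θ ↦ exp (θ I)` on the intervals `(-π, π)`, `[0, π]`, `[0, π)`, so all three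
are retracts of intervals, hence contractible, and any map `C ∩ O → C` is a homotopy equivalence.

`S¹` is not contractible: a null-homotopy of `S¹ ↪ ℂ \ {0}` lifts through the covering
`exp : ℂ → ℂ \ {0}` to a continuous logarithm `L` on `S¹`. Then `z ↦ (L (-z) - L z).im` is an odd
continuous function on the connected space `S¹`, so it vanishes somewhere, while
`exp (L (-z) - L z) = -1` forbids that.
-/

open Complex Set ContinuousMap

local notation "S¹" => {z : ℂ // ‖z‖ = 1}

section Homotopy

variable {X Y : Type*} [TopologicalSpace X] [TopologicalSpace Y]

theorem ContractibleSpace.homotopic [ContractibleSpace Y] (f g : C(X, Y)) : f.Homotopic g := by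
  obtain ⟨p, hp⟩ := id_nullhomotopic Y
  have h (f : C(X, Y)) : f.Homotopic (const X p) := by
    simpa using hp.comp (Homotopic.refl f)
  exact (h f).trans (h g).symm

theorem ContractibleSpace.exists_homotopyEquiv_toFun_eq [ContractibleSpace X] [ContractibleSpace Y]
    (f : C(X, Y)) : ∃ e : X ≃ₕ Y, e.toFun = f := by
  obtain ⟨x⟩ : Nonempty X := inferInstance
  exact ⟨⟨f, const Y x, ContractibleSpace.homotopic _ _, ContractibleSpace.homotopic _ _⟩, rfl⟩

theorem ContractibleSpace.of_retract [ContractibleSpace Y] (f : C(X, Y)) (g : C(Y, X))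
    (hgf : ∀ x, g (f x) = x) : ContractibleSpace X := by
  have hid : ContinuousMap.id X = g.comp ((ContinuousMap.id Y).comp f) := by ext; simp [hgf]
  rw [contractible_iff_id_nullhomotopic, hid]
  exact ((id_nullhomotopic Y).comp_left f).comp_right g

theorem IsCoveringMap.exists_lift_of_homotopic {E A : Type*} [TopologicalSpace E]
    [TopologicalSpace A] {p : E → X} (cov : IsCoveringMap p) {f₀ f₁ : C(A, X)}
    (h : f₀.Homotopic f₁) {F₀ : C(A, E)} (hF₀ : p ∘ F₀ = f₀) : ∃ F₁ : C(A, E), p ∘ F₁ = f₁ := by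
  obtain ⟨H⟩ := h
  have H₀ (a : A) : H (0, a) = p (F₀ a) := by simp [← hF₀]
  refine ⟨(cov.liftHomotopy H.toContinuousMap F₀ H₀).comp ((const A 1).prodMk (.id A)),
    funext fun a => ?_⟩
  exact (congr_fun (cov.liftHomotopy_lifts _ _ H₀) (1, a)).trans (H.apply_one a)

end Homotopy

theorem exists_eq_zero_of_apply_eq_neg {X : Type*} [TopologicalSpace X] [PreconnectedSpace X]
    [Nonempty X] {f : X → ℝ} (hf : Continuous f) {σ : X → X} (hσ : ∀ x, f (σ x) = -f x) :
    ∃ x, f x = 0 := by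
  obtain ⟨x⟩ := ‹Nonempty X›
  have h₁ : ∃ a, f a ≤ 0 :=
    (le_total (f x) 0).elim (fun h => ⟨x, h⟩) fun h => ⟨σ x, by rw [hσ]; linarith⟩
  have h₂ : ∃ b, 0 ≤ f b :=
    (le_total 0 (f x)).elim (fun h => ⟨x, h⟩) fun h => ⟨σ x, by rw [hσ]; linarith⟩
  exact mem_range_of_exists_le_of_exists_ge hf h₁ h₂

namespace Complex

theorem continuousOn_arg_of_im_nonneg : ContinuousOn arg {z : ℂ | 0 ≤ z.im ∧ z ≠ 0} := by
  rintro z ⟨him, hz⟩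
  by_cases hs : z ∈ slitPlane
  · exact (continuousAt_arg hs).continuousWithinAt
  · obtain ⟨hre, him⟩ : z.re ≤ 0 ∧ z.im = 0 := by simpa [mem_slitPlane_iff] using hs
    have hre : z.re < 0 := hre.lt_of_ne fun h => hz (ext h him)
    exact (continuousWithinAt_arg_of_re_neg_of_im_zero hre him).mono fun w hw => hw.1

theorem im_ne_zero_of_exp_eq_neg_one {w : ℂ} (h : exp w = -1) : w.im ≠ 0 := by
  intro him
  have hw : w = (w.re : ℂ) := ext rfl (by simp [him])
  rw [hw, ← ofReal_exp] at h
  have := congrArg re h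
  simp only [ofReal_re, neg_re, one_re] at this
  linarith [Real.exp_pos w.re]

end Complex

section UnitCircle

open scoped Real

noncomputable def expI (θ : ℝ) : S¹ := ⟨exp (θ * I), norm_exp_ofReal_mul_I θ⟩

theorem continuous_expI : Continuous expI := by
  unfold expI; fun_prop

theorem expI_arg (z : S¹) : expI (arg z) = z :=
  Subtype.ext (by simpa [expI, z.2] using norm_mul_exp_arg_mul_I (z : ℂ))

theorem arg_expI {θ : ℝ} (hθ : θ ∈ Ioc (-π) π) : arg (expI θ : ℂ) = θ :=
  Circle.arg_exp hθ.1 hθ.2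

theorem arg_eq_pi_iff_eq_neg_one {z : S¹} : arg z = π ↔ (z : ℂ) = -1 := by
  refine ⟨fun h => ?_, fun h => by rw [h, arg_neg_one]⟩
  rw [← expI_arg z, h]
  exact exp_pi_mul_I

theorem ne_zero_of_mem_unitCircle (z : S¹) : (z : ℂ) ≠ 0 :=
  fun h => by simpa [h] using z.2

instance : ConnectedSpace S¹ :=
  Function.Surjective.connectedSpace (f := expI) (fun z => ⟨_, expI_arg z⟩) continuous_expI

theorem contractibleSpace_of_mem_iff_arg_mem {A : Set S¹} {J : Set ℝ} (hJ : Convex ℝ J)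
    (hJne : J.Nonempty) (hJπ : J ⊆ Ioc (-π) π) (hA : ∀ z : S¹, z ∈ A ↔ arg z ∈ J)
    (hcont : ContinuousOn (fun z : S¹ => arg z) A) : ContractibleSpace A :=
  haveI := hJ.contractibleSpace hJne
  ContractibleSpace.of_retract
    ⟨fun z => ⟨arg z, (hA z).1 z.2⟩, hcont.domRestrict.subtype_mk _⟩
    ⟨fun θ : J => ⟨expI θ, (hA _).2 (by rw [arg_expI (hJπ θ.2)]; exact θ.2)⟩,
      (continuous_expI.comp continuous_subtype_val).subtype_mk _⟩
    fun z => Subtype.ext (expI_arg z)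

def puncturedCircle : Set S¹ := {z | (z : ℂ) ≠ -1}

def upperSemicircle : Set S¹ := {z | 0 ≤ (z : ℂ).im}

theorem mem_puncturedCircle_iff_arg_mem {z : S¹} : z ∈ puncturedCircle ↔ arg z ∈ Ioo (-π) π :=
  ⟨fun h => ⟨neg_pi_lt_arg _, (arg_le_pi _).lt_of_ne (mt arg_eq_pi_iff_eq_neg_one.1 h)⟩,
    fun h => mt arg_eq_pi_iff_eq_neg_one.2 h.2.ne⟩

theorem mem_upperSemicircle_iff_arg_mem {z : S¹} : z ∈ upperSemicircle ↔ arg z ∈ Icc 0 π :=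
  ⟨fun h => ⟨arg_nonneg_iff.2 h, arg_le_pi _⟩, fun h => arg_nonneg_iff.1 h.1⟩

theorem continuousOn_arg_puncturedCircle : ContinuousOn (fun z : S¹ => arg z) puncturedCircle :=
  continuousOn_arg.comp continuous_subtype_val.continuousOn fun z hz =>
    mem_slitPlane_iff_arg.2 ⟨mt arg_eq_pi_iff_eq_neg_one.1 hz, ne_zero_of_mem_unitCircle z⟩

theorem continuousOn_arg_upperSemicircle : ContinuousOn (fun z : S¹ => arg z) upperSemicircle :=
  continuousOn_arg_of_im_nonneg.comp continuous_subtype_val.continuousOn fun z hz =>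
    ⟨hz, ne_zero_of_mem_unitCircle z⟩

theorem contractibleSpace_puncturedCircle : ContractibleSpace puncturedCircle :=
  contractibleSpace_of_mem_iff_arg_mem (convex_Ioo _ _) (nonempty_Ioo.2 (by linarith [Real.pi_pos]))
    Ioo_subset_Ioc_self (fun _ => mem_puncturedCircle_iff_arg_mem)
    continuousOn_arg_puncturedCircle

theorem contractibleSpace_upperSemicircle : ContractibleSpace upperSemicircle :=
  contractibleSpace_of_mem_iff_arg_mem (convex_Icc _ _) (nonempty_Icc.2 Real.pi_pos.le)
    (Icc_subset_Ioc_iff Real.pi_pos.le |>.2 ⟨by linarith [Real.pi_pos], le_rfl⟩)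
    (fun _ => mem_upperSemicircle_iff_arg_mem) continuousOn_arg_upperSemicircle

theorem contractibleSpace_upperSemicircle_inter_puncturedCircle :
    ContractibleSpace ↥(upperSemicircle ∩ puncturedCircle) := by
  refine contractibleSpace_of_mem_iff_arg_mem (convex_Ico 0 π) (nonempty_Ico.2 Real.pi_pos)
    (fun θ hθ => ⟨by linarith [Real.pi_pos, hθ.1], hθ.2.le⟩) (fun z => ?_)
    (continuousOn_arg_upperSemicircle.mono inter_subset_left)
  rw [mem_inter_iff, mem_upperSemicircle_iff_arg_mem, mem_puncturedCircle_iff_arg_mem]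
  exact ⟨fun h => ⟨h.1.1, h.2.2⟩, fun h => ⟨⟨h.1, h.2.le⟩, by linarith [Real.pi_pos, h.1], h.2⟩⟩

theorem not_exists_continuous_log_unitCircle : ¬ ∃ L : C(S¹, ℂ), ∀ z, exp (L z) = z := by
  rintro ⟨L, hL⟩
  let σ : S¹ → S¹ := fun z => ⟨-z, by rw [norm_neg]; exact z.2⟩
  let ψ : S¹ → ℝ := fun z => (L (σ z) - L z).im
  have hψ : Continuous ψ := by fun_prop
  have hψσ (z : S¹) : ψ (σ z) = -ψ z := by
    simp only [ψ, show σ (σ z) = z from Subtype.ext (neg_neg _)]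
    rw [← neg_sub, neg_im]
  have hψ₀ (z : S¹) : ψ z ≠ 0 := by
    refine im_ne_zero_of_exp_eq_neg_one ?_
    rw [Complex.exp_sub, hL, hL, neg_div, div_self (ne_zero_of_mem_unitCircle z)]
  obtain ⟨z, hz⟩ := exists_eq_zero_of_apply_eq_neg hψ hψσ
  exact hψ₀ z hz

theorem not_contractibleSpace_unitCircle : ¬ ContractibleSpace S¹ := by
  intro
  obtain ⟨p, hp⟩ := id_nullhomotopic S¹
  let ι : C(S¹, {w : ℂ // w ≠ 0}) := ⟨fun z => ⟨z, ne_zero_of_mem_unitCircle z⟩, by fun_prop⟩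
  have hι : (const S¹ (ι p)).Homotopic ι := by simpa using (Homotopic.refl ι).comp hp.symm
  obtain ⟨L, hL⟩ := isCoveringMap_exp.exists_lift_of_homotopic hι (F₀ := const S¹ (log p))
    (funext fun _ => Subtype.ext (exp_log (ne_zero_of_mem_unitCircle p)))
  exact not_exists_continuous_log_unitCircle ⟨L, fun z => congrArg Subtype.val (congrFun hL z)⟩

end UnitCircle

/-- There is a cover of the unit circle S¹ = {z : ℂ | ‖z‖ = 1} by an open set `O`
and a closed set `C` such that `O` is contractible and the inclusion
`C ∩ O ↪ C` is a homotopy equivalence, yet `S¹` is not contractible.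
This refutes the inference scheme used in Biss's Propositions 4.5 / 7.3. -/
theorem circle_counterexample_to_biss_covering_argument :
    ∃ O C : Set {z : ℂ // ‖z‖ = 1},
      IsOpen O ∧ IsClosed C ∧ O ∪ C = Set.univ ∧
      ContractibleSpace ↥O ∧
      (∃ e : ContinuousMap.HomotopyEquiv ↥(C ∩ O) ↥C,
        ∀ x : ↥(C ∩ O),
          (e.toFun x : {z : ℂ // ‖z‖ = 1}) = ((x : ↥(C ∩ O)) : {z : ℂ // ‖z‖ = 1})) ∧
      ¬ ContractibleSpace {z : ℂ // ‖z‖ = 1} := by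
  have := contractibleSpace_upperSemicircle
  have := contractibleSpace_upperSemicircle_inter_puncturedCircle
  obtain ⟨e, he⟩ := ContractibleSpace.exists_homotopyEquiv_toFun_eq
    (ContinuousMap.inclusion (inter_subset_left (s := upperSemicircle) (t := puncturedCircle)))
  refine ⟨puncturedCircle, upperSemicircle, ?_, ?_, ?_, contractibleSpace_puncturedCircle,
    ⟨e, fun x => by rw [he]; rfl⟩, not_contractibleSpace_unitCircle⟩
  · exact isOpen_ne_fun continuous_subtype_val continuous_const
  · exact isClosed_le continuous_const (continuous_im.comp continuous_subtype_val)
  · refine eq_univ_of_forall fun z => ?_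
    by_cases hz : (z : ℂ) = -1
    · exact Or.inr (show 0 ≤ (z : ℂ).im by simp [hz])
    · exact Or.inl hz
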